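/- arXiv:2404.07189 — 2 statements merged into one kernel-verified Lean document; each statement's English description precedes it below -/
import Mathlib

section
/- Let R be a finite ring with identity in which 2 is not a unit. Then the unit graph of R is well-covered if and only if the unit graph of R/J(R) is well-covered. -/
open Pointwise

/-- The unit graph of a ring: distinct `x, y` adjacent iff `x + y` is a unit. -/
def unitGraph (R : Type*) [Ring R] : SimpleGraph R where
  Adj x y := x ≠ y ∧ IsUnit (x + y)
  symm := by
    constructor
    rintro x y ⟨h1, h2⟩
    exact ⟨h1.symm, by rwa [add_comm]⟩
  loopless := by constructor; rintro x ⟨h, _⟩; exact h rfl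

/-- The unitary Cayley graph of a ring: distinct `x, y` adjacent iff `x - y` is a unit. -/
def cayleyGraph (R : Type*) [Ring R] : SimpleGraph R where
  Adj x y := x ≠ y ∧ IsUnit (x - y)
  symm := by
    constructor
    rintro x y ⟨h1, h2⟩
    refine ⟨h1.symm, ?_⟩
    rw [← neg_sub]
    exact h2.neg
  loopless := by constructor; rintro x ⟨h, _⟩; exact h rfl

/-- A set of vertices is independent if no two of its elements are adjacent. -/
def IsIndepSet {V : Type*} (G : SimpleGraph V) (A : Set V) : Prop :=
  ∀ ⦃x⦄, x ∈ A → ∀ ⦃y⦄, y ∈ A → ¬ G.Adj x y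

/-- A maximal independent set. -/
def IsMaxIndepSet {V : Type*} (G : SimpleGraph V) (A : Set V) : Prop :=
  IsIndepSet G A ∧ ∀ B, IsIndepSet G B → A ⊆ B → A = B

/-- A graph is well-covered if all maximal independent sets have the same cardinality. -/
def WellCovered {V : Type*} (G : SimpleGraph V) : Prop :=
  ∀ A B : Set V, IsMaxIndepSet G A → IsMaxIndepSet G B → A.ncard = B.ncard

/-!
Every `1 + j` with `j ∈ J(R)` is left invertible, and a finite ring is Dedekind-finite, so `x` is a
unit iff `π x` is. As `2` is not a unit, neither is `π x + π x = 2 * π x`, so vertices with the same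
image are never adjacent: `G'(R)` is the pullback of `G'(R/J(R))` along `π`. The maximal
independent sets of a pullback along a surjection are exactly the preimages of maximal independent
sets, and each preimage has `|J(R)|` times as many elements.
-/

section Comap

variable {V W : Type*} {H : SimpleGraph W} {f : V → W}

lemma IsIndepSet.preimage {B : Set W} (hB : IsIndepSet H B) :
    IsIndepSet (H.comap f) (f ⁻¹' B) :=
  fun _ hx _ hy => hB hx hy

lemma IsIndepSet.image {A : Set V} (hA : IsIndepSet (H.comap f) A) :
    IsIndepSet H (f '' A) := by
  rintro _ ⟨x, hx, rfl⟩ _ ⟨y, hy, rfl⟩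
  exact hA hx hy

lemma IsMaxIndepSet.eq_preimage_image {A : Set V} (hA : IsMaxIndepSet (H.comap f) A) :
    A = f ⁻¹' (f '' A) :=
  hA.2 _ hA.1.image.preimage (Set.subset_preimage_image f A)

lemma IsMaxIndepSet.image (hf : Function.Surjective f) {A : Set V}
    (hA : IsMaxIndepSet (H.comap f) A) : IsMaxIndepSet H (f '' A) := by
  refine ⟨hA.1.image, fun B hB hAB => ?_⟩
  have hA_eq : A = f ⁻¹' B :=
    hA.2 _ hB.preimage (hA.eq_preimage_image.le.trans (Set.preimage_mono hAB))
  rw [hA_eq, Set.image_preimage_eq B hf]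

lemma IsMaxIndepSet.preimage (hf : Function.Surjective f) {B : Set W}
    (hB : IsMaxIndepSet H B) : IsMaxIndepSet (H.comap f) (f ⁻¹' B) := by
  refine ⟨hB.1.preimage, fun C hC hBC => hBC.antisymm ?_⟩
  have hB_eq : B = f '' C := hB.2 _ hC.image <| by
    simpa only [Set.image_preimage_eq B hf] using Set.image_mono (f := f) hBC
  exact hB_eq ▸ Set.subset_preimage_image f C

lemma wellCovered_comap_iff (hf : Function.Surjective f) {k : ℕ} (hk : k ≠ 0)
    (hcard : ∀ B : Set W, (f ⁻¹' B).ncard = k * B.ncard) :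
    WellCovered (H.comap f) ↔ WellCovered H := by
  constructor
  · intro hV B B' hB hB'
    have h := hV _ _ (hB.preimage hf) (hB'.preimage hf)
    rw [hcard, hcard] at h
    exact Nat.eq_of_mul_eq_mul_left (Nat.pos_of_ne_zero hk) h
  · intro hW A A' hA hA'
    rw [hA.eq_preimage_image, hA'.eq_preimage_image, hcard, hcard,
      hW _ _ (hA.image hf) (hA'.image hf)]

end Comap

lemma AddMonoidHom.ncard_preimage {G H : Type*} [AddGroup G] [AddGroup H] [Finite G]
    {f : G →+ H} (hf : Function.Surjective f) (B : Set H) :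
    (f ⁻¹' B).ncard = Nat.card f.ker * B.ncard := by
  classical
  have := Finite.of_surjective f hf
  have : Fintype B := Fintype.ofFinite B
  let e : (Σ b : B, f ⁻¹' {(b : H)}) ≃ f ⁻¹' B :=
    Equiv.sigmaSubtypeFiberEquivSubtype f fun _ => Iff.rfl
  rw [← Nat.card_coe_set_eq, ← Nat.card_coe_set_eq, ← Nat.card_congr e, Nat.card_sigma]
  simp only [Nat.card_congr (f.fiberEquivKerOfSurjective hf _), Finset.sum_const,
    Finset.card_univ, smul_eq_mul, Nat.card_eq_fintype_card, mul_comm]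

lemma isLocalHom_of_ker_le_jacobson {R S : Type*} [Ring R] [IsDedekindFiniteMonoid R] [Ring S]
    {π : R →+* S} (hsurj : Function.Surjective π)
    (hker : RingHom.ker π ≤ Ideal.jacobson ⊥) : IsLocalHom π where
  map_nonunit a := by
    rintro ⟨u, hu⟩
    obtain ⟨b, hb⟩ := hsurj ↑u⁻¹
    have hJ : b * a - 1 ∈ Ideal.jacobson ⊥ :=
      hker (by rw [RingHom.mem_ker, map_sub, map_mul, hb, ← hu, Units.inv_mul, map_one, sub_self])
    obtain ⟨s, hs⟩ := Ideal.exists_mul_sub_mem_of_sub_one_mem_jacobson _ hJ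
    rw [Ideal.mem_bot, sub_eq_zero, ← mul_assoc] at hs
    exact .of_mul_eq_one_right _ hs

lemma not_isUnit_add_self {R : Type*} [Ring R] (h2 : ¬ IsUnit (2 : R)) (x : R) :
    ¬ IsUnit (x + x) := by
  rw [← two_mul, (Commute.ofNat_left 2 x).isUnit_mul_iff]
  exact fun h => h2 h.1

lemma unitGraph_eq_comap {R S : Type*} [Ring R] [Ring S] (π : R →+* S) [IsLocalHom π]
    (h2 : ¬ IsUnit (2 : S)) : unitGraph R = (unitGraph S).comap π := by
  ext x y
  simp only [unitGraph, SimpleGraph.comap_adj, ← map_add, isUnit_map_iff]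
  refine ⟨fun ⟨_, hu⟩ => ⟨fun h => ?_, hu⟩, fun ⟨hne, hu⟩ => ⟨fun h => hne (h ▸ rfl), hu⟩⟩
  have hu' := hu.map π
  rw [map_add, ← h] at hu'
  exact not_isUnit_add_self h2 (π x) hu'

theorem stmt_1 {R : Type*} [Ring R] [Finite R] (h2 : ¬ IsUnit (2 : R))
    {S : Type*} [Ring S] (π : R →+* S) (hsurj : Function.Surjective π)
    (hker : RingHom.ker π = Ideal.jacobson (⊥ : Ideal R)) :
    WellCovered (unitGraph R) ↔ WellCovered (unitGraph S) := by
  have := isLocalHom_of_ker_le_jacobson hsurj hker.le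
  have h2S : ¬ IsUnit (2 : S) := by
    rwa [← map_ofNat π 2, isUnit_map_iff]
  rw [unitGraph_eq_comap π h2S]
  exact wellCovered_comap_iff hsurj Nat.card_pos.ne' (π.toAddMonoidHom.ncard_preimage hsurj)
end

section
/- Let R be a finite ring with identity in which 2 is not a unit, and let x, y be distinct elements of R. Then x + y is a unit of R if and only if x and y have distinct images in R/J(R) and (x + J(R)) + (y + J(R)) is a unit of R/J(R). -/
/-! In a Dedekind-finite ring (e.g. a finite one) every element of `1 + J(R)` is a unit, so a
surjection `π` with kernel in `J(R)` is a local homomorphism: `a` is a unit iff `π a` is.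
This gives the backward direction at once. For the forward direction, if `π x = π y` then
`π (2 * y) = π (x + y)` is a unit, hence so is `2 * y` and therefore `2`. -/

open Pointwise

theorem IsDedekindFiniteMonoid.isUnit_of_sub_one_mem_jacobson_bot {R : Type*} [Ring R]
    [IsDedekindFiniteMonoid R] {r : R} (h : r - 1 ∈ Ideal.jacobson (⊥ : Ideal R)) : IsUnit r := by
  obtain ⟨s, hs⟩ := Ideal.exists_mul_sub_mem_of_sub_one_mem_jacobson r h
  rw [Ideal.mem_bot, sub_eq_zero] at hs
  exact .of_mul_eq_one_right s hs

theorem RingHom.isLocalHom_of_ker_le_jacobson_bot {R S : Type*} [Ring R]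
    [IsDedekindFiniteMonoid R] [Ring S] (f : R →+* S) (hf : Function.Surjective f)
    (hker : RingHom.ker f ≤ Ideal.jacobson (⊥ : Ideal R)) : IsLocalHom f where
  map_nonunit a ha := by
    obtain ⟨b, hb⟩ := hf ↑ha.unit⁻¹
    have hab : a * b - 1 ∈ Ideal.jacobson (⊥ : Ideal R) :=
      hker (by simp [RingHom.mem_ker, hb])
    exact isUnit_of_mul_isUnit_left
      (IsDedekindFiniteMonoid.isUnit_of_sub_one_mem_jacobson_bot hab)

theorem stmt_2_general {R : Type*} [Ring R] [Finite R] (h2 : ¬ IsUnit (2 : R))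
    {S : Type*} [Ring S] (π : R →+* S) (hsurj : Function.Surjective π)
    (hker : RingHom.ker π = Ideal.jacobson (⊥ : Ideal R))
    (x y : R) :
    IsUnit (x + y) ↔ π x ≠ π y ∧ IsUnit (π x + π y) := by
  have := π.isLocalHom_of_ker_le_jacobson_bot hsurj hker.le
  rw [← map_add, isUnit_map_iff]
  refine ⟨fun hu => ⟨fun hxy => h2 (isUnit_of_mul_isUnit_left (y := y) ?_), hu⟩, And.right⟩
  have h2y : π (2 * y) = π (x + y) := by rw [two_mul, map_add, map_add, hxy]
  rwa [← isUnit_map_iff π, h2y, isUnit_map_iff]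

theorem stmt_2 {R : Type*} [Ring R] [Finite R] (h2 : ¬ IsUnit (2 : R))
    {S : Type*} [Ring S] (π : R →+* S) (hsurj : Function.Surjective π)
    (hker : RingHom.ker π = Ideal.jacobson (⊥ : Ideal R))
    (x y : R) (hxy : x ≠ y) :
    IsUnit (x + y) ↔ π x ≠ π y ∧ IsUnit (π x + π y) :=
  stmt_2_general h2 π hsurj hker x y
end
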